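/- Let π be a frozen percolation type flow with initial kernel a kernel κ and initial value π(0) ∈ Π_{≤1} having strictly positive entries. Then π_i(t) > 0 for every i ∈ [k] and every t ≥ 0; moreover, writing κ_max = max_{i,j∈[k]} κ_{i,j}, one has π_i(t) ≥ π_i(0)·exp(−(κ_max + t)) for all i ∈ [k] and all t ≥ 0. -/

import Mathlib

/-!
The total mass `s(t) = ∑ⱼ πⱼ(t)` has derivative `-φ(t) < 0` past the critical time, so it stays
at most `1`. Reading the eigenvector equation `μ (κ(t) ∘ π(t)) = μ` in coordinate `i` gives
`μᵢ ≤ (κ_max + t) πᵢ(t)`, so `πᵢ' = -φ μᵢ ≥ -φ (κ_max + t) πᵢ`. Hence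
`πᵢ(t) · exp((κ_max + t)(1 - s(t)))` is nondecreasing on `[t_c, ∞)`: the factor `1 - s ≥ 0` in
the derivative of the exponent absorbs the growth of `κ_max + t`. Comparing its values at `t_c`
and at `t` yields `πᵢ(t) ≥ πᵢ(0) exp(-(κ_max + t))`.
-/

open Matrix

noncomputable def perronRoot {k : ℕ} (A : Matrix (Fin k) (Fin k) ℝ) : ℝ :=
  sSup ((fun z : ℂ => ‖z‖) '' spectrum ℂ (A.map Complex.ofReal))

def circ {k : ℕ} (A : Matrix (Fin k) (Fin k) ℝ) (v : Fin k → ℝ) : Matrix (Fin k) (Fin k) ℝ :=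
  Matrix.of fun i j => A i j * v j

noncomputable def l1norm {k : ℕ} (v : Fin k → ℝ) : ℝ := ∑ i, |v i|

noncomputable def kernelAt {k : ℕ} (κ : Matrix (Fin k) (Fin k) ℝ) (t : ℝ) :
    Matrix (Fin k) (Fin k) ℝ :=
  κ + t • Matrix.of (fun _ _ => (1 : ℝ))

def IsKernel {k : ℕ} (κ : Matrix (Fin k) (Fin k) ℝ) : Prop :=
  κ.IsSymm ∧ ∀ i j, 0 ≤ κ i j

structure IsTypeFlow {k : ℕ} (κ : Matrix (Fin k) (Fin k) ℝ) (π : ℝ → Fin k → ℝ)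
    (tc : ℝ) (φ : ℝ → ℝ) : Prop where
  nonneg : ∀ t ≥ (0 : ℝ), ∀ i, 0 ≤ π t i
  ne_zero : ∀ t ≥ (0 : ℝ), π t ≠ 0
  cont : ContinuousOn π (Set.Ici 0)
  tc_nonneg : 0 ≤ tc
  phi_pos : ∀ t > tc, 0 < φ t
  phi_cont : ContinuousOn φ (Set.Ioi tc)
  init : ∀ t, 0 ≤ t → t ≤ tc → π t = π 0
  crit : ∀ t ≥ tc, perronRoot (circ (kernelAt κ t) (π t)) = 1
  flowDE : ∀ t > tc, ∃ μ : Fin k → ℝ,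
      (∀ i, 0 < μ i) ∧ l1norm μ = 1 ∧
      Matrix.vecMul μ (circ (kernelAt κ t) (π t)) = μ ∧
      HasDerivAt π (-(φ t) • μ) t

open Set

lemma monotoneOn_Ici_of_hasDerivAt_nonneg {f : ℝ → ℝ} {a : ℝ} (hf : ContinuousOn f (Ici a))
    (hf' : ∀ x > a, ∃ d, HasDerivAt f d x ∧ 0 ≤ d) : MonotoneOn f (Ici a) := by
  choose! f' hf' hf'₀ using hf'
  refine monotoneOn_of_hasDerivWithinAt_nonneg (f' := f') (convex_Ici a) hf ?_ ?_ <;>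
    rw [interior_Ici]
  · exact fun x hx => (hf' x hx).hasDerivWithinAt
  · exact hf'₀

lemma vecMul_circ_apply {k : ℕ} (μ : Fin k → ℝ) (A : Matrix (Fin k) (Fin k) ℝ) (v : Fin k → ℝ)
    (i : Fin k) : vecMul μ (circ A v) i = ∑ j, μ j * A j i * v i := by
  simp only [vecMul, dotProduct, circ, of_apply, mul_assoc]

lemma kernelAt_apply {k : ℕ} (κ : Matrix (Fin k) (Fin k) ℝ) (t : ℝ) (i j : Fin k) :
    kernelAt κ t i j = κ i j + t := by
  simp [kernelAt]

lemma le_mul_of_vecMul_circ_eq_self {k : ℕ} {A : Matrix (Fin k) (Fin k) ℝ} {v μ : Fin k → ℝ}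
    {c : ℝ} {i : Fin k} (hμ : ∀ j, 0 ≤ μ j) (hμ_sum : ∑ j, μ j = 1) (hA : ∀ j, A j i ≤ c)
    (hv : 0 ≤ v i) (hfix : vecMul μ (circ A v) = μ) : μ i ≤ c * v i :=
  calc μ i = ∑ j, μ j * A j i * v i := by rw [← vecMul_circ_apply, hfix]
    _ ≤ ∑ j, μ j * c * v i := by gcongr with j; exacts [hμ j, hA j]
    _ = c * v i := by rw [← Finset.sum_mul, ← Finset.sum_mul, hμ_sum, one_mul]

namespace IsTypeFlow

variable {k : ℕ} {κ : Matrix (Fin k) (Fin k) ℝ} {π : ℝ → Fin k → ℝ} {tc : ℝ} {φ : ℝ → ℝ}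

lemma exists_hasDerivAt_apply (hπ : IsTypeFlow κ π tc φ) {t : ℝ} (ht : tc < t) :
    ∃ μ : Fin k → ℝ, (∀ i, 0 ≤ μ i) ∧ ∑ i, μ i = 1 ∧
      vecMul μ (circ (kernelAt κ t) (π t)) = μ ∧
      ∀ i, HasDerivAt (fun s => π s i) (-(φ t) * μ i) t := by
  obtain ⟨μ, hμ_pos, hμ_norm, hfix, hderiv⟩ := hπ.flowDE t ht
  refine ⟨μ, fun i => (hμ_pos i).le, ?_, hfix, fun i => by simpa using hasDerivAt_pi.mp hderiv i⟩
  rw [← hμ_norm, l1norm]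
  exact Finset.sum_congr rfl fun i _ => (abs_of_pos (hμ_pos i)).symm

lemma continuousOn_apply (hπ : IsTypeFlow κ π tc φ) (i : Fin k) :
    ContinuousOn (fun t => π t i) (Ici 0) :=
  (continuous_apply i).comp_continuousOn hπ.cont

lemma continuousOn_sum (hπ : IsTypeFlow κ π tc φ) :
    ContinuousOn (fun t => ∑ i, π t i) (Ici 0) :=
  continuousOn_finsetSum _ fun i _ => hπ.continuousOn_apply i

lemma Ici_tc_subset_Ici_zero (hπ : IsTypeFlow κ π tc φ) : Ici tc ⊆ Ici 0 :=
  Ici_subset_Ici.mpr hπ.tc_nonneg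

lemma hasDerivAt_sum (hπ : IsTypeFlow κ π tc φ) {t : ℝ} (ht : tc < t) :
    HasDerivAt (fun s => ∑ i, π s i) (-(φ t)) t := by
  obtain ⟨μ, -, hμ_sum, -, hderiv⟩ := hπ.exists_hasDerivAt_apply ht
  have := HasDerivAt.fun_sum (u := Finset.univ) fun i _ => hderiv i
  rwa [← Finset.mul_sum, hμ_sum, mul_one] at this

lemma antitoneOn_sum (hπ : IsTypeFlow κ π tc φ) : AntitoneOn (fun t => ∑ i, π t i) (Ici tc) := by
  refine antitoneOn_of_hasDerivWithinAt_nonpos (f' := fun t => -φ t) (convex_Ici tc)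
    (hπ.continuousOn_sum.mono hπ.Ici_tc_subset_Ici_zero) ?_ ?_ <;> rw [interior_Ici]
  · exact fun t ht => (hπ.hasDerivAt_sum ht).hasDerivWithinAt
  · exact fun t ht => neg_nonpos.mpr (hπ.phi_pos t ht).le

lemma sum_le_one (hπ : IsTypeFlow κ π tc φ) (h₀ : ∑ i, π 0 i ≤ 1) {t : ℝ} (ht : tc ≤ t) :
    ∑ i, π t i ≤ 1 := by
  have hπ_tc : π tc = π 0 := hπ.init tc hπ.tc_nonneg le_rfl
  calc ∑ i, π t i ≤ ∑ i, π tc i := hπ.antitoneOn_sum self_mem_Ici ht ht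
    _ ≤ 1 := by rwa [hπ_tc]

lemma monotoneOn_mul_exp (hπ : IsTypeFlow κ π tc φ) (h₀ : ∑ i, π 0 i ≤ 1) {K : ℝ}
    (hK : ∀ i j, κ i j ≤ K) (i : Fin k) :
    MonotoneOn (fun t => π t i * Real.exp ((K + t) * (1 - ∑ j, π t j))) (Ici tc) := by
  refine monotoneOn_Ici_of_hasDerivAt_nonneg ?_ fun t ht => ?_
  · exact ((hπ.continuousOn_apply i).mul (Real.continuous_exp.comp_continuousOn
      ((continuousOn_const.add continuousOn_id).mul
        (continuousOn_const.sub hπ.continuousOn_sum)))).mono hπ.Ici_tc_subset_Ici_zero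
  obtain ⟨μ, hμ, hμ_sum, hfix, hderiv⟩ := hπ.exists_hasDerivAt_apply ht
  have hπt : 0 ≤ π t i := hπ.nonneg t (hπ.tc_nonneg.trans ht.le) i
  have hμ_le : μ i ≤ (K + t) * π t i :=
    le_mul_of_vecMul_circ_eq_self hμ hμ_sum (fun j => by simp [kernelAt_apply, hK j i]) hπt hfix
  have hexponent : HasDerivAt (fun s => (K + s) * (1 - ∑ j, π s j))
      ((1 - ∑ j, π t j) + (K + t) * φ t) t := by
    simpa using ((hasDerivAt_id t).const_add K).fun_mul ((hπ.hasDerivAt_sum ht).const_sub 1)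
  have hmass : 0 ≤ 1 - ∑ j, π t j := sub_nonneg.mpr (hπ.sum_le_one h₀ ht.le)
  have key : 0 ≤ φ t * ((K + t) * π t i - μ i) + π t i * (1 - ∑ j, π t j) :=
    add_nonneg (mul_nonneg (hπ.phi_pos t ht).le (sub_nonneg.mpr hμ_le)) (mul_nonneg hπt hmass)
  exact ⟨_, (hderiv i).mul hexponent.exp,
    (mul_nonneg (Real.exp_pos _).le key).trans_eq (by ring)⟩

lemma mul_exp_le (hπ : IsTypeFlow κ π tc φ) (h₀ : ∑ i, π 0 i ≤ 1) {K : ℝ} (hK₀ : 0 ≤ K)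
    (hK : ∀ i j, κ i j ≤ K) (i : Fin k) {t : ℝ} (ht : 0 ≤ t) :
    π 0 i * Real.exp (-(K + t)) ≤ π t i := by
  have hπ0 : 0 ≤ π 0 i := hπ.nonneg 0 le_rfl i
  rcases le_or_gt t tc with htc | htc
  · rw [hπ.init t ht htc]
    exact mul_le_of_le_one_right hπ0 (Real.exp_le_one_iff.mpr (by linarith))
  have hmono := hπ.monotoneOn_mul_exp h₀ hK i self_mem_Ici htc.le htc.le
  simp only [hπ.init tc hπ.tc_nonneg le_rfl] at hmono
  have hKt : 0 ≤ K + t := by linarith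
  have hs_t : 0 ≤ ∑ j, π t j := Finset.sum_nonneg fun j _ => hπ.nonneg t ht j
  rw [Real.exp_neg, ← div_eq_mul_inv, div_le_iff₀ (Real.exp_pos _)]
  calc π 0 i ≤ π 0 i * Real.exp ((K + tc) * (1 - ∑ j, π 0 j)) :=
        le_mul_of_one_le_right hπ0 <| Real.one_le_exp <|
          mul_nonneg (by linarith [hπ.tc_nonneg]) (sub_nonneg.mpr h₀)
    _ ≤ π t i * Real.exp ((K + t) * (1 - ∑ j, π t j)) := hmono
    _ ≤ π t i * Real.exp (K + t) := by
        gcongr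
        · exact hπ.nonneg t ht i
        · linarith [mul_nonneg hKt hs_t]

end IsTypeFlow

theorem frozen_percolation_type_flow_stays_positive_general
    {k : ℕ} (κ : Matrix (Fin k) (Fin k) ℝ) (hκ : IsKernel κ)
    (π : ℝ → Fin k → ℝ) (tc : ℝ) (φ : ℝ → ℝ) (hπ : IsTypeFlow κ π tc φ)
    (hπ0pos : ∀ i, 0 < π 0 i) (hπ0sum : ∑ i, π 0 i ≤ 1) :
    ∀ i, ∀ t ≥ (0 : ℝ), 0 < π t i ∧
      π 0 i * Real.exp (-((⨆ i, ⨆ j, κ i j) + t)) ≤ π t i := by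
  intro i t ht
  have hK : ∀ i j, κ i j ≤ ⨆ i, ⨆ j, κ i j := fun i j =>
    (Finite.le_ciSup (κ i) j).trans (Finite.le_ciSup (fun i => ⨆ j, κ i j) i)
  have hbound := hπ.mul_exp_le hπ0sum ((hκ.2 i i).trans (hK i i)) hK i ht
  exact ⟨(mul_pos (hπ0pos i) (Real.exp_pos _)).trans_le hbound, hbound⟩

/-- Lemma 3.2 (flowsstaypositive): every component of a frozen percolation type flow
stays strictly positive, with an explicit exponential lower bound. -/
theorem frozen_percolation_type_flow_stays_positive
    {k : ℕ} (hk : 0 < k) (κ : Matrix (Fin k) (Fin k) ℝ) (hκ : IsKernel κ)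
    (π : ℝ → Fin k → ℝ) (tc : ℝ) (φ : ℝ → ℝ) (hπ : IsTypeFlow κ π tc φ)
    (hπ0pos : ∀ i, 0 < π 0 i) (hπ0sum : ∑ i, π 0 i ≤ 1) :
    ∀ i, ∀ t ≥ (0 : ℝ), 0 < π t i ∧
      π 0 i * Real.exp (-((⨆ i, ⨆ j, κ i j) + t)) ≤ π t i :=
  frozen_percolation_type_flow_stays_positive_general κ hκ π tc φ hπ hπ0pos hπ0sum
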